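/- Let ρ be a nonzero positive semidefinite complex matrix indexed by Fin m × Fin n whose partial transpose ρ^Γ is also positive semidefinite. Let P and Q be the orthogonal projections onto ker ρ and ker ρ^Γ respectively, and set W = P + Q^Γ. Assume there exist no nonzero x ∈ ℂ^m and nonzero y ∈ ℂ^n such that P·(x⊗y) = 0 and Q·(x⊗conj(y)) = 0 (the edge condition). Then δ := min over ‖x‖ = ‖y‖ = 1 of (x⊗y)ᴴ W (x⊗y) is strictly positive, and for every ε with 0 < ε ≤ δ: (a) (x⊗y)ᴴ (W − ε·I) (x⊗y) ≥ 0 for all x, y; and (b) there do not exist positive semidefinite matrices Q' and R' with W − ε·I = Q' + R'^Γ. -/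

import Mathlib

open Matrix
open scoped ComplexOrder

/-- Kronecker product vector: `(x ⊗ y)_{(i,k)} = x i * y k`. -/
noncomputable def kron {m n : ℕ} (x : Fin m → ℂ) (y : Fin n → ℂ) : Fin m × Fin n → ℂ :=
  fun ik => x ik.1 * y ik.2

/-- The biquadratic form `p_W(x,y) = (x⊗y)ᴴ W (x⊗y)`. -/
noncomputable def bqf {m n : ℕ} (W : Matrix (Fin m × Fin n) (Fin m × Fin n) ℂ)
    (x : Fin m → ℂ) (y : Fin n → ℂ) : ℂ :=
  star (kron x y) ⬝ᵥ (W *ᵥ kron x y)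

/-- Partial transpose (on the second factor): `(W^Γ)_{(i,k),(j,l)} = W_{(i,l),(j,k)}`. -/
noncomputable def pt {m n : ℕ} (W : Matrix (Fin m × Fin n) (Fin m × Fin n) ℂ) :
    Matrix (Fin m × Fin n) (Fin m × Fin n) ℂ :=
  Matrix.of fun p q => W (p.1, q.2) (q.1, p.2)


/-!
Since `P` and `Q` are orthogonal projections, `(x⊗y)ᴴ (P + Q^Γ) (x⊗y) = ‖P(x⊗y)‖² + ‖Q(x⊗ȳ)‖²`,
which the edge condition makes positive on product vectors, so `δ > 0`; by homogeneity the form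
is at least `δ ‖x‖² ‖y‖²`, which gives (a). For (b), `ρ P = 0` and `ρ^Γ Q = 0`, so
`tr ((W - ε I) ρ) = -ε tr ρ < 0`, whereas `tr ((Q' + R'^Γ) ρ) = tr (Q' ρ) + tr (R' ρ^Γ) ≥ 0`.
-/

def ptIndexSwap (m n : ℕ) :
    ((Fin m × Fin n) × (Fin m × Fin n)) ≃ ((Fin m × Fin n) × (Fin m × Fin n)) where
  toFun pq := ((pq.1.1, pq.2.2), (pq.2.1, pq.1.2))
  invFun pq := ((pq.1.1, pq.2.2), (pq.2.1, pq.1.2))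

lemma star_dotProduct_self_eq_sum_normSq {ι : Type*} [Fintype ι] (u : ι → ℂ) :
    star u ⬝ᵥ u = ((∑ i, Complex.normSq (u i) : ℝ) : ℂ) := by
  simp [dotProduct, Complex.normSq_eq_conj_mul_self]

lemma sum_normSq_smul {ι : Type*} [Fintype ι] (a : ℂ) (u : ι → ℂ) :
    ∑ i, Complex.normSq ((a • u) i) = Complex.normSq a * ∑ i, Complex.normSq (u i) := by
  simp [Finset.mul_sum, Complex.normSq_mul]

lemma exists_sum_normSq_eq_one_smul {ι : Type*} [Fintype ι] {x : ι → ℂ} (hx : x ≠ 0) :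
    ∃ (c : ℂ) (u : ι → ℂ), ∑ i, Complex.normSq (u i) = 1 ∧ x = c • u ∧
      Complex.normSq c = ∑ i, Complex.normSq (x i) := by
  set N := ∑ i, Complex.normSq (x i)
  have hN : 0 < N := by
    have := dotProduct_star_self_pos_iff.mpr hx
    rwa [star_dotProduct_self_eq_sum_normSq, Complex.zero_lt_real] at this
  have hc : Complex.normSq (Real.sqrt N : ℂ) = N := by
    rw [Complex.normSq_ofReal, Real.mul_self_sqrt hN.le]
  have hc0 : (Real.sqrt N : ℂ) ≠ 0 := by exact_mod_cast (Real.sqrt_pos.mpr hN).ne'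
  refine ⟨Real.sqrt N, (Real.sqrt N : ℂ)⁻¹ • x, ?_, by rw [smul_inv_smul₀ hc0], hc⟩
  rw [sum_normSq_smul, map_inv₀, hc, inv_mul_cancel₀ hN.ne']

lemma kron_smul_smul {m n : ℕ} (c d : ℂ) (x : Fin m → ℂ) (y : Fin n → ℂ) :
    kron (c • x) (d • y) = (c * d) • kron x y := by
  funext p
  simp only [kron, Pi.smul_apply, smul_eq_mul]
  ring

lemma star_kron_dotProduct_kron {m n : ℕ} (x : Fin m → ℂ) (y : Fin n → ℂ) :
    star (kron x y) ⬝ᵥ kron x y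
      = (((∑ i, Complex.normSq (x i)) * ∑ k, Complex.normSq (y k) : ℝ) : ℂ) := by
  rw [star_dotProduct_self_eq_sum_normSq, Fintype.sum_prod_type, Finset.sum_mul_sum]
  simp [kron, Complex.normSq_mul]

lemma bqf_smul_smul {m n : ℕ} (W : Matrix (Fin m × Fin n) (Fin m × Fin n) ℂ)
    (c d : ℂ) (x : Fin m → ℂ) (y : Fin n → ℂ) :
    bqf W (c • x) (d • y) = ((Complex.normSq c * Complex.normSq d : ℝ) : ℂ) * bqf W x y := by
  simp only [bqf, kron_smul_smul, mulVec_smul, star_smul, smul_dotProduct, dotProduct_smul,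
    smul_eq_mul, Complex.ofReal_mul, Complex.normSq_eq_conj_mul_self, RCLike.star_def, map_mul]
  ring

lemma bqf_zero_left {m n : ℕ} (W : Matrix (Fin m × Fin n) (Fin m × Fin n) ℂ) (y : Fin n → ℂ) :
    bqf W 0 y = 0 := by
  simpa using bqf_smul_smul W 0 1 0 y

lemma bqf_zero_right {m n : ℕ} (W : Matrix (Fin m × Fin n) (Fin m × Fin n) ℂ) (x : Fin m → ℂ) :
    bqf W x 0 = 0 := by
  simpa using bqf_smul_smul W 1 0 x 0

lemma bqf_sub_smul_one {m n : ℕ} (W : Matrix (Fin m × Fin n) (Fin m × Fin n) ℂ) (a : ℂ)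
    (x : Fin m → ℂ) (y : Fin n → ℂ) :
    bqf (W - a • 1) x y
      = bqf W x y - a * (((∑ i, Complex.normSq (x i)) * ∑ k, Complex.normSq (y k) : ℝ) : ℂ) := by
  rw [← star_kron_dotProduct_kron]
  simp [bqf, sub_mulVec, dotProduct_sub, smul_mulVec]

lemma bqf_pt {m n : ℕ} (W : Matrix (Fin m × Fin n) (Fin m × Fin n) ℂ)
    (x : Fin m → ℂ) (y : Fin n → ℂ) :
    bqf (pt W) x y = star (kron x (star y)) ⬝ᵥ (W *ᵥ kron x (star y)) := by
  simp only [bqf, dotProduct, mulVec, pt, kron, of_apply, Pi.star_apply, Finset.mul_sum]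
  rw [← Fintype.sum_prod_type', ← Fintype.sum_prod_type']
  refine Fintype.sum_equiv (ptIndexSwap m n) _ _ fun pq => ?_
  simp only [ptIndexSwap, Equiv.coe_fn_mk, star_mul', star_star]
  ring

lemma Matrix.IsHermitian.pt {m n : ℕ} {W : Matrix (Fin m × Fin n) (Fin m × Fin n) ℂ}
    (hW : W.IsHermitian) : (pt W).IsHermitian := by
  ext p q
  simpa [_root_.pt] using congrFun₂ hW (p.1, q.2) (q.1, p.2)

lemma Matrix.IsHermitian.ofReal_re_bqf {m n : ℕ} {W : Matrix (Fin m × Fin n) (Fin m × Fin n) ℂ}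
    (hW : W.IsHermitian) (x : Fin m → ℂ) (y : Fin n → ℂ) :
    ((bqf W x y).re : ℂ) = bqf W x y :=
  Complex.ext rfl (hW.im_star_dotProduct_mulVec_self (kron x y)).symm

lemma Matrix.IsHermitian.star_dotProduct_mulVec_eq_of_isIdempotentElem {ι R : Type*} [Fintype ι]
    [CommSemiring R] [StarRing R] {P : Matrix ι ι R} (hP : P.IsHermitian) (hPI : IsIdempotentElem P) (v : ι → R) :
    star v ⬝ᵥ (P *ᵥ v) = star (P *ᵥ v) ⬝ᵥ (P *ᵥ v) := by
  conv_lhs => rw [← hPI.eq, ← mulVec_mulVec, dotProduct_mulVec]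
  rw [star_mulVec, hP.eq]

lemma bqf_add_pt_of_isIdempotentElem {m n : ℕ} {P Q : Matrix (Fin m × Fin n) (Fin m × Fin n) ℂ}
    (hP : P.IsHermitian) (hPI : IsIdempotentElem P) (hQ : Q.IsHermitian) (hQI : IsIdempotentElem Q)
    (x : Fin m → ℂ) (y : Fin n → ℂ) :
    bqf (P + pt Q) x y = star (P *ᵥ kron x y) ⬝ᵥ (P *ᵥ kron x y)
      + star (Q *ᵥ kron x (star y)) ⬝ᵥ (Q *ᵥ kron x (star y)) := by
  rw [← hP.star_dotProduct_mulVec_eq_of_isIdempotentElem hPI,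
    ← hQ.star_dotProduct_mulVec_eq_of_isIdempotentElem hQI, ← bqf_pt]
  simp only [bqf, add_mulVec, dotProduct_add]

lemma bqf_add_pt_pos {m n : ℕ} {P Q : Matrix (Fin m × Fin n) (Fin m × Fin n) ℂ}
    (hP : P.IsHermitian) (hPI : IsIdempotentElem P) (hQ : Q.IsHermitian) (hQI : IsIdempotentElem Q)
    {x : Fin m → ℂ} {y : Fin n → ℂ} (h : P *ᵥ kron x y ≠ 0 ∨ Q *ᵥ kron x (star y) ≠ 0) :
    0 < bqf (P + pt Q) x y := by
  rw [bqf_add_pt_of_isIdempotentElem hP hPI hQ hQI]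
  rcases h with h | h
  · exact add_pos_of_pos_of_nonneg (dotProduct_star_self_pos_iff.mpr h)
      (dotProduct_star_self_nonneg _)
  · exact add_pos_of_nonneg_of_pos (dotProduct_star_self_nonneg _)
      (dotProduct_star_self_pos_iff.mpr h)

section LowerBound

def bqfUnitValues {m n : ℕ} (W : Matrix (Fin m × Fin n) (Fin m × Fin n) ℂ) : Set ℝ :=
  {r | ∃ (x : Fin m → ℂ) (y : Fin n → ℂ),
    (∑ i, Complex.normSq (x i)) = 1 ∧ (∑ k, Complex.normSq (y k)) = 1 ∧ bqf W x y = (r : ℂ)}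

variable {m n : ℕ} {W : Matrix (Fin m × Fin n) (Fin m × Fin n) ℂ} {δ : ℝ}

lemma Matrix.IsHermitian.mul_le_bqf (hW : W.IsHermitian)
    (hδ : δ ∈ lowerBounds (bqfUnitValues W)) (x : Fin m → ℂ) (y : Fin n → ℂ) :
    ((δ * ((∑ i, Complex.normSq (x i)) * ∑ k, Complex.normSq (y k)) : ℝ) : ℂ) ≤ bqf W x y := by
  rcases eq_or_ne x 0 with rfl | hx
  · simp [bqf_zero_left]
  rcases eq_or_ne y 0 with rfl | hy
  · simp [bqf_zero_right]
  obtain ⟨c, u, hu, rfl, hc⟩ := exists_sum_normSq_eq_one_smul hx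
  obtain ⟨d, v, hv, rfl, hd⟩ := exists_sum_normSq_eq_one_smul hy
  have hδuv : (δ : ℂ) ≤ bqf W u v := by
    rw [← hW.ofReal_re_bqf, Complex.real_le_real]
    exact hδ ⟨u, v, hu, hv, (hW.ofReal_re_bqf u v).symm⟩
  rw [bqf_smul_smul, ← hc, ← hd, mul_comm δ, Complex.ofReal_mul]
  exact mul_le_mul_of_nonneg_left hδuv (Complex.zero_le_real.mpr
    (mul_nonneg (Complex.normSq_nonneg c) (Complex.normSq_nonneg d)))

lemma Matrix.IsHermitian.bqf_sub_smul_one_nonneg (hW : W.IsHermitian)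
    (hδ : δ ∈ lowerBounds (bqfUnitValues W))
    {ε : ℝ} (hεδ : ε ≤ δ) (x : Fin m → ℂ) (y : Fin n → ℂ) :
    0 ≤ bqf (W - (ε : ℂ) • 1) x y := by
  rw [bqf_sub_smul_one, sub_nonneg]
  refine le_trans ?_ (hW.mul_le_bqf hδ x y)
  rw [← Complex.ofReal_mul, Complex.real_le_real]
  exact mul_le_mul_of_nonneg_right hεδ (mul_nonneg
    (Finset.sum_nonneg fun i _ => Complex.normSq_nonneg (x i))
    (Finset.sum_nonneg fun k _ => Complex.normSq_nonneg (y k)))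

end LowerBound

lemma trace_pt_mul {m n : ℕ} (A B : Matrix (Fin m × Fin n) (Fin m × Fin n) ℂ) :
    (pt A * B).trace = (A * pt B).trace := by
  simp only [Matrix.trace, Matrix.diag, Matrix.mul_apply, pt, of_apply]
  rw [← Fintype.sum_prod_type', ← Fintype.sum_prod_type']
  exact Fintype.sum_equiv (ptIndexSwap m n) _ _ fun _ => rfl

open scoped MatrixOrder in
lemma Matrix.PosSemidef.trace_mul_nonneg {ι 𝕜 : Type*} [Fintype ι] [DecidableEq ι] [RCLike 𝕜]
    {A B : Matrix ι ι 𝕜} (hA : A.PosSemidef) (hB : B.PosSemidef) : 0 ≤ (A * B).trace := by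
  obtain ⟨C, rfl⟩ := CStarAlgebra.nonneg_iff_eq_star_mul_self.mp hB.nonneg
  rw [star_eq_conjTranspose, ← Matrix.mul_assoc, trace_mul_comm, ← Matrix.mul_assoc]
  exact (hA.mul_mul_conjTranspose_same C).trace_nonneg

lemma Matrix.PosSemidef.trace_pos_of_ne_zero {ι 𝕜 : Type*} [Fintype ι] [RCLike 𝕜]
    {A : Matrix ι ι 𝕜} (hA : A.PosSemidef) (hA0 : A ≠ 0) : 0 < A.trace :=
  hA.trace_nonneg.lt_of_ne (Ne.symm fun h => hA0 (hA.trace_eq_zero_iff.mp h))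

lemma trace_add_pt_mul_nonneg {m n : ℕ} {Q R ρ : Matrix (Fin m × Fin n) (Fin m × Fin n) ℂ}
    (hQ : Q.PosSemidef) (hR : R.PosSemidef) (hρ : ρ.PosSemidef) (hρΓ : (pt ρ).PosSemidef) :
    0 ≤ ((Q + pt R) * ρ).trace := by
  rw [add_mul, trace_add, trace_pt_mul]
  exact add_nonneg (hQ.trace_mul_nonneg hρ) (hR.trace_mul_nonneg hρΓ)

lemma Matrix.mul_eq_zero_of_forall_mulVec_eq_self {ι R : Type*} [Fintype ι] [CommSemiring R]
    {A P : Matrix ι ι R}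
    (hPI : IsIdempotentElem P) (hker : ∀ v, P *ᵥ v = v → A *ᵥ v = 0) : A * P = 0 :=
  ext_iff_mulVec.mpr fun v => by
    rw [← mulVec_mulVec, zero_mulVec]
    exact hker _ (by rw [mulVec_mulVec, hPI.eq])

lemma trace_add_pt_sub_smul_one_mul {m n : ℕ} {P Q ρ : Matrix (Fin m × Fin n) (Fin m × Fin n) ℂ}
    (hρP : ρ * P = 0) (hρQ : pt ρ * Q = 0) (a : ℂ) :
    ((P + pt Q - a • 1) * ρ).trace = -(a * ρ.trace) := by
  rw [sub_mul, add_mul, trace_sub, trace_add, trace_mul_comm, hρP, trace_pt_mul, trace_mul_comm,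
    hρQ, smul_mul_assoc, one_mul, trace_smul, smul_eq_mul]
  simp

theorem stmt_8 (m n : ℕ) (ρ : Matrix (Fin m × Fin n) (Fin m × Fin n) ℂ)
    (hρne : ρ ≠ 0) (hρ : ρ.PosSemidef) (hρΓ : (pt ρ).PosSemidef)
    (P Q : Matrix (Fin m × Fin n) (Fin m × Fin n) ℂ)
    (hP : P.IsHermitian ∧ P * P = P ∧ ∀ v : Fin m × Fin n → ℂ, P *ᵥ v = v ↔ ρ *ᵥ v = 0)
    (hQ : Q.IsHermitian ∧ Q * Q = Q ∧ ∀ v : Fin m × Fin n → ℂ, Q *ᵥ v = v ↔ (pt ρ) *ᵥ v = 0)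
    (hedge : ¬ ∃ (x : Fin m → ℂ) (y : Fin n → ℂ), x ≠ 0 ∧ y ≠ 0 ∧
      P *ᵥ kron x y = 0 ∧ Q *ᵥ kron x (star y) = 0)
    (δ : ℝ)
    (hδ : IsLeast {r : ℝ | ∃ (x : Fin m → ℂ) (y : Fin n → ℂ),
      (∑ i, Complex.normSq (x i)) = 1 ∧ (∑ k, Complex.normSq (y k)) = 1 ∧
        bqf (P + pt Q) x y = (r : ℂ)} δ) :
    0 < δ ∧ ∀ ε : ℝ, 0 < ε → ε ≤ δ →
      (∀ (x : Fin m → ℂ) (y : Fin n → ℂ), 0 ≤ bqf (P + pt Q - (ε : ℂ) • 1) x y) ∧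
      ¬ ∃ Q' R' : Matrix (Fin m × Fin n) (Fin m × Fin n) ℂ,
          Q'.PosSemidef ∧ R'.PosSemidef ∧ P + pt Q - (ε : ℂ) • 1 = Q' + pt R' := by
  obtain ⟨hPH, hPI, hPker⟩ := hP
  obtain ⟨hQH, hQI, hQker⟩ := hQ
  have hδpos : 0 < δ := by
    obtain ⟨x, y, hx, hy, hxy⟩ := hδ.1
    have hx0 : x ≠ 0 := by rintro rfl; simp at hx
    have hy0 : y ≠ 0 := by rintro rfl; simp at hy
    have := bqf_add_pt_pos hPH hPI hQH hQI (not_and_or.mp fun h => hedge ⟨x, y, hx0, hy0, h⟩)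
    rwa [hxy, Complex.zero_lt_real] at this
  refine ⟨hδpos, fun ε hε hεδ => ⟨(hPH.add hQH.pt).bqf_sub_smul_one_nonneg hδ.2 hεδ, ?_⟩⟩
  rintro ⟨Q', R', hQ', hR', hdecomp⟩
  have hρP := mul_eq_zero_of_forall_mulVec_eq_self hPI fun v => (hPker v).mp
  have hρQ := mul_eq_zero_of_forall_mulVec_eq_self hQI fun v => (hQker v).mp
  have htrace := trace_add_pt_mul_nonneg hQ' hR' hρ hρΓ
  rw [← hdecomp, trace_add_pt_sub_smul_one_mul hρP hρQ, neg_nonneg] at htrace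
  exact htrace.not_gt (mul_pos (Complex.zero_lt_real.mpr hε) (hρ.trace_pos_of_ne_zero hρne))
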